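/- Let (R, Δ) be an odd form ring with a hyperbolic pair η. Then the transvection map T^η : Δ_η^{|η|'} → U(R, Δ) defined by β(T^η(u)) = ρ(u) + π(u) − conj(π(u)) and γ(T^η(u)) = u ∔ q_{−η}·(ρ(u) − conj(π(u))) ∸ φ(ρ(u) + π(u)) is a well-defined injective group homomorphism. -/

import Mathlib

open scoped commutatorElement

/-- An odd form ring `(R, Δ)`: a non-unital ring `R` with involution `conj`,
a group `Δ` with a right action of the multiplicative semigroup `R^•` and
structure maps `phi : R → Δ`, `pi ρ : Δ → R` satisfying the odd form ring
axioms.  The group operation of `Δ` (written `∔` in the paper) is written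
multiplicatively here. -/
structure OddForm (R Δ : Type*) [NonUnitalRing R] [Group Δ] where
  conj : R → R
  conj_add : ∀ a b, conj (a + b) = conj a + conj b
  conj_mul : ∀ a b, conj (a * b) = conj b * conj a
  conj_conj : ∀ a, conj (conj a) = a
  act : Δ → R → Δ
  act_mul : ∀ u v a, act (u * v) a = act u a * act v a
  act_act : ∀ u a b, act (act u a) b = act u (a * b)
  phi : R → Δ
  pi : Δ → R
  rho : Δ → R
  pi_mul : ∀ u v, pi (u * v) = pi u + pi v
  pi_act : ∀ u a, pi (act u a) = pi u * a
  phi_add : ∀ a b, phi (a + b) = phi a * phi b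
  phi_act : ∀ a b, act (phi b) a = phi (conj a * b * a)
  rho_mul : ∀ u v, rho (u * v) = rho u - conj (pi u) * pi v + rho v
  rho_act : ∀ u a, rho (act u a) = conj a * rho u * a
  rho_pi : ∀ u, rho u + conj (rho u) + conj (pi u) * pi u = 0
  pi_phi : ∀ a, pi (phi a) = 0
  rho_phi : ∀ a, rho (phi a) = a - conj a
  comm_phi : ∀ u v, ⁅u, v⁆ = phi (-(conj (pi u) * pi v))
  phi_symm : ∀ a, conj a = a → phi a = 1
  act_addR : ∀ u a b, act u (a + b) = act u a * phi (conj b * rho u * a) * act u b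

namespace OddForm

variable {R Δ : Type*} [NonUnitalRing R] [Group Δ]

/-- The action of `a + 1` (an element of the unitalization `R ⋊ ℤ`) on `Δ`:
`u · (a + 1) = u·a ∔ φ(ρ(u) a) ∔ u`. -/
def actA (o : OddForm R Δ) (u : Δ) (a : R) : Δ :=
  o.act u a * o.phi (o.rho u * a) * u

/-- Membership in the unitary group `U(R, Δ)`: for `g = (β, γ)` with `α = β + 1`,
`α⁻¹ = conj α` (expressed without the unitalization) together with `π(γ) = β` and
`ρ(γ) = conj β`. -/
def umem (o : OddForm R Δ) (g : R × Δ) : Prop :=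
  g.1 * o.conj g.1 + g.1 + o.conj g.1 = 0 ∧
  o.conj g.1 * g.1 + o.conj g.1 + g.1 = 0 ∧
  o.pi g.2 = g.1 ∧ o.rho g.2 = o.conj g.1

/-- The group operation of the unitary group: `α(gg') = α(g) α(g')` and
`γ(gg') = γ(g) · α(g') ∔ γ(g')`. -/
def umul (o : OddForm R Δ) (g h : R × Δ) : R × Δ :=
  (g.1 * h.1 + g.1 + h.1, o.actA g.2 h.1 * h.2)

/-- The identity element of the unitary group. -/
def uone (o : OddForm R Δ) : R × Δ := ((0 : R), (1 : Δ))

/-- The inverse in the unitary group: `β(g⁻¹) = conj β(g)`,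
`γ(g⁻¹) = (γ(g) · conj α(g))⁻¹`. -/
def uinv (o : OddForm R Δ) (g : R × Δ) : R × Δ :=
  (o.conj g.1, (o.actA g.2 (o.conj g.1))⁻¹)

end OddForm

namespace OddForm

variable {R Δ : Type*} [NonUnitalRing R] [Group Δ]

/-- `η = (em, ep, qm, qp)` is a hyperbolic pair: `ep = e_η`, `em = e_{−η}` are
orthogonal idempotents with `em = conj ep`, and `qp = q_η`, `qm = q_{−η}` satisfy
`π(q_{±η}) = e_{±η}`, `ρ(q_{±η}) = 0`, `q_{±η} = q_{±η}·e_{±η}`. -/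
def IsHPair (o : OddForm R Δ) (em ep : R) (qm qp : Δ) : Prop :=
  ep * ep = ep ∧ em * em = em ∧ ep * em = 0 ∧ em * ep = 0 ∧
  o.conj ep = em ∧
  o.pi qp = ep ∧ o.pi qm = em ∧ o.rho qp = 0 ∧ o.rho qm = 0 ∧
  o.act qp ep = qp ∧ o.act qm em = qm

/-- Membership in `Δ_η^{|η|'} = {u ∈ Δ·e_η | e_{|η|} π(u) = 0}`. -/
def Dmem (o : OddForm R Δ) (em ep : R) (u : Δ) : Prop :=
  o.act u ep = u ∧ (ep + em) * o.pi u = 0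

/-- The transvection `T^η(u)`, as an element of `R × Δ`:
`β = ρ(u) + π(u) − conj π(u)`,
`γ = u ∔ q_{−η}·(ρ(u) − conj π(u)) ∸ φ(ρ(u) + π(u))`. -/
def Tv (o : OddForm R Δ) (qm : Δ) (u : Δ) : R × Δ :=
  (o.rho u + o.pi u - o.conj (o.pi u),
   u * o.act qm (o.rho u - o.conj (o.pi u)) * (o.phi (o.rho u + o.pi u))⁻¹)

/-- `a` and `b` are mutually inverse elements of the unital ring
`R_{ηη} = e_η R e_η` (with identity `ep`). -/
def IsInvPair (ep a b : R) : Prop :=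
  a = ep * a * ep ∧ b = ep * b * ep ∧ a * b = ep ∧ b * a = ep

/-- The elementary dilation `D^η(a)` (with `b = a⁻¹` in `R_{ηη}`):
`β = a + conj(a)⁻¹ − e_{|η|}`,
`γ = q_{−η}·(conj(a)⁻¹ − e_{−η}) ∔ q_η·(a − e_η) ∸ φ(a − e_η)`. -/
def Dil (o : OddForm R Δ) (em ep : R) (qm qp : Δ) (a b : R) : R × Δ :=
  (a + o.conj b - (ep + em),
   o.act qm (o.conj b - em) * o.act qp (a - ep) * (o.phi (a - ep))⁻¹)

/-- Membership in the maximal parabolic subgroup `P_η`. -/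
def Pmem (o : OddForm R Δ) (em ep : R) (qm : Δ) (g : R × Δ) : Prop :=
  o.umem g ∧ g.1 * em = em * g.1 * em ∧ ep * g.1 = ep * g.1 * ep ∧
  o.act g.2 em = o.act qm (g.1 * em)

/-- Membership in the smaller unitary group `U_{|η|'}`. -/
def Uprime (o : OddForm R Δ) (em ep : R) (g : R × Δ) : Prop :=
  o.umem g ∧ g.1 * (ep + em) = 0 ∧ (ep + em) * g.1 = 0 ∧ o.act g.2 (ep + em) = 1

end OddForm


/-! For `u ∈ Δ_η^{|η|'}` put `p = π(u)`, `r = ρ(u)`, `c = conj p`. The conditions `u = u·e_η` and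
`e_{|η|} p = 0` give `r ∈ e_{−η} R e_η`, `p ∈ R e_η`, `c ∈ e_{−η} R` and `c e_{|η|} = 0`, so for
two such `u, v` every product of these elements vanishes except `c_u p_v`. Hence
`β(T u) β(T v) = −c_u p_v` and `conj β(T u) = −β(T u) − c_u p_u`, which yield the unitarity
identities and the multiplicativity of `β`. For `γ`: `u` acts trivially on `β(T v)`, `φ` is
central and `a ↦ q_{−η}·a` is additive because `ρ(q_{−η}) = 0`, so `γ(T u · T v)` rearranges
into `γ(T (u v))`. Finally `e_{|η|} β(T u) = r − c` recovers `p`, then `r`, from `β(T u)`,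
and `γ(T u)` then determines `u`. -/

theorem mul_eq_zero_of_mul_eq_self_of_mul_eq_self {R : Type*} [NonUnitalRing R] {e f x y : R}
    (hef : e * f = 0) (hx : x * e = x) (hy : f * y = y) : x * y = 0 := by
  rw [← hx, ← hy, mul_assoc, ← mul_assoc e, hef, zero_mul, mul_zero]

theorem mul_eq_zero_of_mul_eq_self_of_add_mul_eq_zero {R : Type*} [NonUnitalRing R] {e f x y : R}
    (hef : e * f = 0) (hx : x * e = x) (hy : (e + f) * y = 0) : x * y = 0 := by
  have hxf : x * f = 0 := by rw [← hx, mul_assoc, hef, mul_zero]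
  have hx' : x * (e + f) = x := by rw [mul_add, hx, hxf, add_zero]
  rw [← hx', mul_assoc, hy, mul_zero]

theorem mul_eq_zero_of_mul_add_eq_zero_of_mul_eq_self {R : Type*} [NonUnitalRing R] {e f x y : R}
    (hf : f * f = f) (hef : e * f = 0) (hx : x * (e + f) = 0) (hy : f * y = y) : x * y = 0 := by
  have hy' : (e + f) * y = y := by
    rw [add_mul, ← hy, ← mul_assoc, ← mul_assoc, hef, hf, zero_mul, zero_add]
  rw [← hy', ← mul_assoc, hx, zero_mul]

theorem rearrange_of_commute_of_mem_center {G : Type*} [Group G] {a b c u v z₁ z₂ z₃ : G}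
    (hau : Commute a u) (hav : Commute a v) (hbv : Commute b v)
    (hz₁ : z₁ ∈ Subgroup.center G) (hz₂ : z₂ ∈ Subgroup.center G) :
    a * z₁ * (u * b * z₂) * (v * c * z₃) = u * v * (a * b * c) * (z₁ * z₂ * z₃) := by
  rw [Subgroup.mem_center_iff] at hz₁ hz₂
  calc a * z₁ * (u * b * z₂) * (v * c * z₃) = a * (u * (b * (v * (c * (z₁ * (z₂ * z₃)))))) := by
        simp only [mul_assoc]
        rw [← hz₂ (v * (c * z₃)), ← hz₁]
        simp only [mul_assoc]
        rw [← mul_assoc z₃, hz₂ z₃, hz₁]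
    _ = u * v * (a * b * c) * (z₁ * z₂ * z₃) := by
        rw [hau.left_comm, hbv.left_comm, hav.left_comm]
        simp only [mul_assoc]

namespace OddForm

variable {R Δ : Type*} [NonUnitalRing R] [Group Δ] {o : OddForm R Δ}

theorem conj_zero : o.conj 0 = 0 := (AddMonoidHom.mk' o.conj o.conj_add).map_zero

theorem conj_sub (a b : R) : o.conj (a - b) = o.conj a - o.conj b :=
  (AddMonoidHom.mk' o.conj o.conj_add).map_sub a b

theorem conj_neg (a : R) : o.conj (-a) = -o.conj a :=
  (AddMonoidHom.mk' o.conj o.conj_add).map_neg a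

theorem phi_zero : o.phi 0 = 1 :=
  (MonoidHom.mk' (fun a : Multiplicative R => o.phi a.toAdd) fun _ _ => o.phi_add _ _).map_one

theorem phi_neg (a : R) : o.phi (-a) = (o.phi a)⁻¹ :=
  (MonoidHom.mk' (fun a : Multiplicative R => o.phi a.toAdd) fun _ _ => o.phi_add _ _).map_inv
    (Multiplicative.ofAdd a)

theorem act_one (a : R) : o.act 1 a = 1 :=
  (MonoidHom.mk' (fun u => o.act u a) fun u v => o.act_mul u v a).map_one

theorem act_inv (u : Δ) (a : R) : o.act u⁻¹ a = (o.act u a)⁻¹ :=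
  (MonoidHom.mk' (fun u => o.act u a) fun u v => o.act_mul u v a).map_inv u

theorem commute_of_conj_pi_mul_pi_eq_zero {u v : Δ} (h : o.conj (o.pi u) * o.pi v = 0) :
    Commute u v :=
  commutatorElement_eq_one_iff_commute.mp (by rw [o.comm_phi, h, neg_zero, phi_zero])

theorem phi_mem_center (a : R) : o.phi a ∈ Subgroup.center Δ :=
  Subgroup.mem_center_iff.mpr fun u =>
    (commute_of_conj_pi_mul_pi_eq_zero (by rw [o.pi_phi, mul_zero])).eq

theorem act_zero (u : Δ) : o.act u 0 = 1 := by
  simpa [mul_zero, phi_zero] using o.act_addR u 0 0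

theorem act_add_of_rho_eq_zero {q : Δ} (hq : o.rho q = 0) (a b : R) :
    o.act q (a + b) = o.act q a * o.act q b := by
  rw [o.act_addR, hq, mul_zero, zero_mul, phi_zero, mul_one]

namespace IsHPair

variable {em ep : R} {qm qp : Δ}

theorem ep_mul_ep (hη : IsHPair o em ep qm qp) : ep * ep = ep := hη.1

theorem em_mul_em (hη : IsHPair o em ep qm qp) : em * em = em := hη.2.1

theorem ep_mul_em (hη : IsHPair o em ep qm qp) : ep * em = 0 := hη.2.2.1

theorem conj_ep (hη : IsHPair o em ep qm qp) : o.conj ep = em := hη.2.2.2.2.1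

theorem conj_em (hη : IsHPair o em ep qm qp) : o.conj em = ep := by
  rw [← hη.conj_ep, o.conj_conj]

theorem pi_qm (hη : IsHPair o em ep qm qp) : o.pi qm = em := hη.2.2.2.2.2.2.1

theorem rho_qm (hη : IsHPair o em ep qm qp) : o.rho qm = 0 := hη.2.2.2.2.2.2.2.2.1

end IsHPair

section Transvection

variable {em ep : R} {qm qp : Δ} {u v : Δ}

theorem Tv_fst : (Tv o qm u).1 = o.rho u + o.pi u - o.conj (o.pi u) := rfl

theorem Tv_snd :
    (Tv o qm u).2 = u * o.act qm (o.rho u - o.conj (o.pi u)) * (o.phi (o.rho u + o.pi u))⁻¹ :=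
  rfl

theorem conj_rho (u : Δ) : o.conj (o.rho u) = -o.rho u - o.conj (o.pi u) * o.pi u := by
  rw [eq_sub_iff_add_eq, eq_neg_iff_add_eq_zero, ← o.rho_pi u]
  abel

theorem conj_Tv_fst (u : Δ) :
    o.conj (Tv o qm u).1 = -(Tv o qm u).1 - o.conj (o.pi u) * o.pi u := by
  rw [Tv_fst, conj_sub, o.conj_add, o.conj_conj, conj_rho]
  abel

namespace Dmem

theorem pi_mul_ep (hu : Dmem o em ep u) : o.pi u * ep = o.pi u := by
  rw [← o.pi_act, hu.1]

theorem em_mul_rho_mul_ep (hη : IsHPair o em ep qm qp) (hu : Dmem o em ep u) :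
    em * o.rho u * ep = o.rho u := by
  rw [← hη.conj_ep, ← o.rho_act, hu.1]

theorem rho_mul_ep (hη : IsHPair o em ep qm qp) (hu : Dmem o em ep u) :
    o.rho u * ep = o.rho u := by
  rw [← hu.em_mul_rho_mul_ep hη, mul_assoc, hη.ep_mul_ep]

theorem em_mul_rho (hη : IsHPair o em ep qm qp) (hu : Dmem o em ep u) :
    em * o.rho u = o.rho u := by
  rw [← hu.em_mul_rho_mul_ep hη, ← mul_assoc, ← mul_assoc, hη.em_mul_em]

theorem em_mul_conj_pi (hη : IsHPair o em ep qm qp) (hu : Dmem o em ep u) :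
    em * o.conj (o.pi u) = o.conj (o.pi u) := by
  rw [← hη.conj_ep, ← o.conj_mul, hu.pi_mul_ep]

theorem conj_pi_mul_add (hη : IsHPair o em ep qm qp) (hu : Dmem o em ep u) :
    o.conj (o.pi u) * (ep + em) = 0 := by
  have h := congrArg o.conj hu.2
  rwa [o.conj_mul, o.conj_add, hη.conj_ep, hη.conj_em, conj_zero, add_comm] at h

theorem rho_add_pi_mul_ep (hη : IsHPair o em ep qm qp) (hu : Dmem o em ep u) :
    (o.rho u + o.pi u) * ep = o.rho u + o.pi u := by
  rw [add_mul, hu.rho_mul_ep hη, hu.pi_mul_ep]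

theorem em_mul_rho_sub_conj_pi (hη : IsHPair o em ep qm qp) (hu : Dmem o em ep u) :
    em * (o.rho u - o.conj (o.pi u)) = o.rho u - o.conj (o.pi u) := by
  rw [mul_sub, hu.em_mul_rho hη, hu.em_mul_conj_pi hη]

theorem conj_pi_mul_eq_zero (hη : IsHPair o em ep qm qp) (hu : Dmem o em ep u) {y : R}
    (hy : em * y = y) : o.conj (o.pi u) * y = 0 :=
  mul_eq_zero_of_mul_add_eq_zero_of_mul_eq_self hη.em_mul_em hη.ep_mul_em
    (hu.conj_pi_mul_add hη) hy

theorem mul_pi_eq_zero (hη : IsHPair o em ep qm qp) (hv : Dmem o em ep v) {x : R}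
    (hx : x * ep = x) : x * o.pi v = 0 :=
  mul_eq_zero_of_mul_eq_self_of_add_mul_eq_zero hη.ep_mul_em hx hv.2

theorem mul_Tv_fst_eq_zero (hη : IsHPair o em ep qm qp) (hv : Dmem o em ep v) {x : R}
    (hx : x * ep = x) : x * (Tv o qm v).1 = 0 := by
  rw [Tv_fst, show o.rho v + o.pi v - o.conj (o.pi v)
    = (o.rho v - o.conj (o.pi v)) + o.pi v by abel, mul_add,
    mul_eq_zero_of_mul_eq_self_of_mul_eq_self hη.ep_mul_em hx (hv.em_mul_rho_sub_conj_pi hη),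
    hv.mul_pi_eq_zero hη hx, add_zero]

theorem Tv_fst_mul_eq_zero (hη : IsHPair o em ep qm qp) (hu : Dmem o em ep u) {y : R}
    (hy : em * y = y) : (Tv o qm u).1 * y = 0 := by
  rw [Tv_fst, sub_mul,
    mul_eq_zero_of_mul_eq_self_of_mul_eq_self hη.ep_mul_em (hu.rho_add_pi_mul_ep hη) hy,
    hu.conj_pi_mul_eq_zero hη hy, sub_zero]

theorem conj_pi_mul_Tv_fst (hη : IsHPair o em ep qm qp) (hu : Dmem o em ep u)
    (hv : Dmem o em ep v) : o.conj (o.pi u) * (Tv o qm v).1 = o.conj (o.pi u) * o.pi v := by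
  rw [Tv_fst, show o.rho v + o.pi v - o.conj (o.pi v)
    = (o.rho v - o.conj (o.pi v)) + o.pi v by abel, mul_add,
    hu.conj_pi_mul_eq_zero hη (hv.em_mul_rho_sub_conj_pi hη), zero_add]

theorem Tv_fst_mul_Tv_fst (hη : IsHPair o em ep qm qp) (hu : Dmem o em ep u)
    (hv : Dmem o em ep v) : (Tv o qm u).1 * (Tv o qm v).1 = -(o.conj (o.pi u) * o.pi v) := by
  rw [Tv_fst (u := u), sub_mul, hv.mul_Tv_fst_eq_zero hη (hu.rho_add_pi_mul_ep hη),
    hu.conj_pi_mul_Tv_fst hη hv, zero_sub]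

theorem conj_Tv_fst_mul_Tv_fst (hη : IsHPair o em ep qm qp) (hu : Dmem o em ep u)
    (hv : Dmem o em ep v) : o.conj (Tv o qm u).1 * (Tv o qm v).1 = o.conj (o.pi u) * o.pi v := by
  rw [conj_Tv_fst, sub_mul, neg_mul, hu.Tv_fst_mul_Tv_fst hη hv, mul_assoc,
    hv.mul_Tv_fst_eq_zero hη hu.pi_mul_ep, mul_zero, neg_neg, sub_zero]

theorem rho_sub_conj_pi_mul_Tv_fst (hη : IsHPair o em ep qm qp) (hu : Dmem o em ep u)
    (hv : Dmem o em ep v) :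
    (o.rho u - o.conj (o.pi u)) * (Tv o qm v).1 = -(o.conj (o.pi u) * o.pi v) := by
  rw [sub_mul, hv.mul_Tv_fst_eq_zero hη (hu.rho_mul_ep hη), hu.conj_pi_mul_Tv_fst hη hv, zero_sub]

theorem ep_mul_Tv_fst (hη : IsHPair o em ep qm qp) (hv : Dmem o em ep v) :
    ep * (Tv o qm v).1 = em * -o.pi v := by
  rw [Tv_fst, show o.rho v + o.pi v - o.conj (o.pi v)
    = (o.rho v - o.conj (o.pi v)) + o.pi v by abel, mul_add,
    mul_eq_zero_of_mul_eq_self_of_mul_eq_self hη.ep_mul_em hη.ep_mul_ep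
      (hv.em_mul_rho_sub_conj_pi hη), zero_add, mul_neg, eq_neg_iff_add_eq_zero, ← add_mul, hv.2]

theorem add_mul_Tv_fst (hη : IsHPair o em ep qm qp) (hu : Dmem o em ep u) :
    (ep + em) * (Tv o qm u).1 = o.rho u - o.conj (o.pi u) := by
  rw [add_mul, hu.ep_mul_Tv_fst hη, Tv_fst, mul_sub, mul_add, hu.em_mul_rho hη,
    hu.em_mul_conj_pi hη, mul_neg]
  abel

theorem umem_Tv (hη : IsHPair o em ep qm qp) (hu : Dmem o em ep u) : o.umem (Tv o qm u) := by
  refine ⟨?_, ?_, ?_, ?_⟩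
  · rw [conj_Tv_fst, mul_sub, mul_neg, hu.Tv_fst_mul_Tv_fst hη hu, ← mul_assoc,
      hu.Tv_fst_mul_eq_zero hη (hu.em_mul_conj_pi hη), zero_mul]
    abel
  · rw [hu.conj_Tv_fst_mul_Tv_fst hη hu, conj_Tv_fst]
    abel
  · rw [Tv_snd, ← phi_neg, o.pi_mul, o.pi_mul, o.pi_act, hη.pi_qm, o.pi_phi,
      hu.em_mul_rho_sub_conj_pi hη, Tv_fst]
    abel
  · rw [Tv_snd, ← phi_neg, o.rho_mul, o.rho_mul, o.rho_act, hη.rho_qm, o.pi_act, hη.pi_qm,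
      o.pi_phi, o.rho_phi, hu.em_mul_rho_sub_conj_pi hη,
      hu.conj_pi_mul_eq_zero hη (hu.em_mul_rho_sub_conj_pi hη), mul_zero, zero_mul, mul_zero,
      conj_Tv_fst, Tv_fst, conj_neg, o.conj_add, conj_rho]
    abel

theorem act_em_mul (hη : IsHPair o em ep qm qp) (hu : Dmem o em ep u) (a : R) :
    o.act u (em * a) = 1 := by
  have hem : o.act u em = 1 := by rw [← hu.1, o.act_act, hη.ep_mul_em, act_zero]
  rw [← o.act_act, hem, act_one]

theorem act_Tv_fst (hη : IsHPair o em ep qm qp) (hu : Dmem o em ep u) (hv : Dmem o em ep v) :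
    o.act u (Tv o qm v).1 = 1 := by
  rw [← hu.1, o.act_act, hv.ep_mul_Tv_fst hη, hu.act_em_mul hη]

theorem act_Tv_snd_Tv_fst (hη : IsHPair o em ep qm qp) (hu : Dmem o em ep u)
    (hv : Dmem o em ep v) :
    o.act (Tv o qm u).2 (Tv o qm v).1 = o.act qm (-(o.conj (o.pi u) * o.pi v)) := by
  rw [Tv_snd, o.act_mul, o.act_mul, hu.act_Tv_fst hη hv, o.act_act, act_inv, o.phi_act,
    mul_assoc (o.conj _), hv.mul_Tv_fst_eq_zero hη (hu.rho_add_pi_mul_ep hη), mul_zero, phi_zero,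
    inv_one, mul_one, one_mul, hu.rho_sub_conj_pi_mul_Tv_fst hη hv]

theorem commute_act_qm_neg_conj_pi_mul_pi (hη : IsHPair o em ep qm qp) (hu : Dmem o em ep u)
    {w : Δ} (hw : Dmem o em ep w) :
    Commute (o.act qm (-(o.conj (o.pi u) * o.pi v))) w := by
  refine commute_of_conj_pi_mul_pi_eq_zero (o := o) ?_
  rw [o.pi_act, hη.pi_qm, mul_neg, ← mul_assoc, hu.em_mul_conj_pi hη, conj_neg, o.conj_mul,
    o.conj_conj, neg_mul, mul_assoc, hw.mul_pi_eq_zero hη hu.pi_mul_ep, mul_zero, neg_zero]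

theorem commute_act_qm_rho_sub_conj_pi (hη : IsHPair o em ep qm qp) (hu : Dmem o em ep u)
    (hv : Dmem o em ep v) : Commute (o.act qm (o.rho u - o.conj (o.pi u))) v := by
  refine commute_of_conj_pi_mul_pi_eq_zero (o := o) ?_
  rw [o.pi_act, hη.pi_qm, hu.em_mul_rho_sub_conj_pi hη, conj_sub, o.conj_conj, conj_rho,
    show -o.rho u - o.conj (o.pi u) * o.pi u - o.pi u
      = -(o.rho u + o.pi u) - o.conj (o.pi u) * o.pi u by abel,
    sub_mul, neg_mul, hv.mul_pi_eq_zero hη (hu.rho_add_pi_mul_ep hη), mul_assoc,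
    hv.mul_pi_eq_zero hη hu.pi_mul_ep, mul_zero, neg_zero, sub_zero]

theorem Tv_mul (hη : IsHPair o em ep qm qp) (hu : Dmem o em ep u) (hv : Dmem o em ep v) :
    Tv o qm (u * v) = o.umul (Tv o qm u) (Tv o qm v) := by
  refine Prod.ext ?_ ?_
  · dsimp only [umul]
    rw [hu.Tv_fst_mul_Tv_fst hη hv, Tv_fst, Tv_fst, Tv_fst, o.rho_mul, o.pi_mul, o.conj_add]
    abel
  · dsimp only [umul, actA]
    rw [hu.act_Tv_snd_Tv_fst hη hv, (hu.umem_Tv hη).2.2.2, hu.conj_Tv_fst_mul_Tv_fst hη hv,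
      Tv_snd, Tv_snd (u := u), Tv_snd (u := v),
      rearrange_of_commute_of_mem_center (hu.commute_act_qm_neg_conj_pi_mul_pi hη hu)
        (hu.commute_act_qm_neg_conj_pi_mul_pi hη hv) (hu.commute_act_qm_rho_sub_conj_pi hη hv)
        (phi_mem_center _) (inv_mem (phi_mem_center _)),
      ← act_add_of_rho_eq_zero hη.rho_qm, ← act_add_of_rho_eq_zero hη.rho_qm,
      ← phi_neg, ← phi_neg, ← phi_neg, ← o.phi_add, ← o.phi_add, o.rho_mul, o.pi_mul, o.conj_add]
    congr 3 <;> abel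

theorem pi_eq_Tv_fst_sub (hη : IsHPair o em ep qm qp) (hu : Dmem o em ep u) :
    o.pi u = (Tv o qm u).1 - (ep + em) * (Tv o qm u).1 := by
  rw [hu.add_mul_Tv_fst hη, Tv_fst]
  abel

theorem eq_of_Tv_eq (hη : IsHPair o em ep qm qp) (hu : Dmem o em ep u) (hv : Dmem o em ep v)
    (h : Tv o qm u = Tv o qm v) : u = v := by
  have hpi : o.pi u = o.pi v := by rw [hu.pi_eq_Tv_fst_sub hη, hv.pi_eq_Tv_fst_sub hη, h]
  have hrho : o.rho u = o.rho v := by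
    have h₁ := congrArg Prod.fst h
    rw [Tv_fst, Tv_fst, hpi] at h₁
    exact add_right_cancel (sub_left_inj.mp h₁)
  have h₂ := congrArg Prod.snd h
  rw [Tv_snd, Tv_snd, hpi, hrho] at h₂
  exact mul_right_cancel (mul_right_cancel h₂)

end Dmem

end Transvection

end OddForm

open OddForm in
/-- Let `(R, Δ)` be an odd form ring with a hyperbolic pair `η`.  Then
`T^η : Δ_η^{|η|'} → U(R, Δ)` is a well-defined injective group homomorphism. -/
theorem transvection_injective_hom {R Δ : Type*} [NonUnitalRing R] [Group Δ]
    (o : OddForm R Δ) (em ep : R) (qm qp : Δ) (hη : IsHPair o em ep qm qp) :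
    (∀ u : Δ, Dmem o em ep u → o.umem (Tv o qm u)) ∧
    (∀ u v : Δ, Dmem o em ep u → Dmem o em ep v →
      Tv o qm (u * v) = o.umul (Tv o qm u) (Tv o qm v)) ∧
    (∀ u v : Δ, Dmem o em ep u → Dmem o em ep v →
      Tv o qm u = Tv o qm v → u = v) :=
  ⟨fun _ hu => hu.umem_Tv hη, fun _ _ hu hv => hu.Tv_mul hη hv,
    fun _ _ hu hv => hu.eq_of_Tv_eq hη hv⟩
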